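/- The image set AV = { Au : u ∈ V } is relatively compact in the Banach space C[ε,Λ] of continuous real-valued functions on [ε,Λ] with the supremum norm; equivalently, AV is uniformly bounded and equicontinuous, so its closure in C[ε,Λ] is compact. -/

import Mathlib

/-!
For `u ∈ V` write `Au(x) = (λ/2) ∫_ε^Λ k(x, y) g_u(y) dy` with kernel `k(x, y) = 1 / (2 max(x, y))`
and `g_u(y) = y u(y) / (y + u(y)²)`. By AM–GM, `y + u² ≥ 2 √y |u|`, so `|g_u| ≤ √Λ / 2` whatever
`u` is, while `k` is bounded by `1/(2ε)` and `1/(2ε²)`-Lipschitz in `x`. Hence the family `AV` is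
uniformly bounded and uniformly Lipschitz, and Arzelà–Ascoli gives relative compactness.
-/

open Real Set MeasureTheory intervalIntegral

/-- The function `w(x) = (4ε/λ)·√(ε/(Λx))`. -/
noncomputable def wfun (lam ε Λ : ℝ) (x : ℝ) : ℝ :=
  (4 * ε / lam) * Real.sqrt (ε / (Λ * x))

/-- The nonlinear integral operator `A`. -/
noncomputable def opA (lam ε Λ : ℝ) (u : ℝ → ℝ) (x : ℝ) : ℝ :=
  (lam / 2) * ∫ y in ε..Λ, (1 / (y + x + |y - x|)) * (y * u y / (y + (u y) ^ 2))

/-- Membership in the set `V`: continuous on `[ε,Λ]` and `w(x) ≤ u(x) ≤ (λ/4)√Λ` there. -/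
def memV (lam ε Λ : ℝ) (u : ℝ → ℝ) : Prop :=
  ContinuousOn u (Set.Icc ε Λ) ∧
    ∀ x ∈ Set.Icc ε Λ, wfun lam ε Λ x ≤ u x ∧ u x ≤ (lam / 4) * Real.sqrt Λ

open scoped NNReal

theorem ContinuousMap.isCompact_closure_of_lipschitzWith {X β : Type*} [PseudoMetricSpace X]
    [CompactSpace X] [MetricSpace β] {S : Set C(X, β)} {K : ℝ≥0} {Q : Set β}
    (hQ : IsCompact Q) (hS : ∀ f ∈ S, LipschitzWith K f ∧ ∀ x, f x ∈ Q) :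
    IsCompact (closure S) := by
  let e := ContinuousMap.isometryEquivBoundedOfCompact X β
  rw [← e.toHomeomorph.isCompact_image, e.toHomeomorph.image_closure]
  refine BoundedContinuousFunction.arzela_ascoli Q hQ _ ?_ ?_
  · rintro _ x ⟨f, hf, rfl⟩
    exact (hS f hf).2 x
  · refine (LipschitzWith.uniformEquicontinuous _ K ?_).equicontinuous
    rintro ⟨_, f, hf, rfl⟩
    exact (hS f hf).1

lemma abs_mul_div_add_sq_le {y : ℝ} (hy : 0 < y) (t : ℝ) : |y * t / (y + t ^ 2)| ≤ √y / 2 := by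
  have hs := Real.sq_sqrt hy.le
  have hs0 := Real.sqrt_pos.2 hy
  rw [abs_div, abs_of_pos (by positivity : 0 < y + t ^ 2), div_le_div_iff₀ (by positivity) two_pos,
    abs_mul, abs_of_pos hy, ← sq_abs t]
  have am_gm : √y * (y + |t| ^ 2) - y * |t| * 2 = √y * (√y - |t|) ^ 2 := by
    linear_combination (2 * |t| - √y) * hs
  linarith [mul_nonneg hs0.le (sq_nonneg (√y - |t|))]

lemma abs_one_div_sub_one_div_le {ε a b : ℝ} (hε : 0 < ε) (ha : ε ≤ a) (hb : ε ≤ b) :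
    |1 / a - 1 / b| ≤ |a - b| / ε ^ 2 := by
  have ha0 : 0 < a := hε.trans_le ha
  have hb0 : 0 < b := hε.trans_le hb
  rw [div_sub_div _ _ ha0.ne' hb0.ne', abs_div, abs_of_pos (mul_pos ha0 hb0), one_mul, mul_one,
    abs_sub_comm]
  gcongr
  nlinarith

lemma add_add_abs_sub_eq_two_mul_max (x y : ℝ) : y + x + |y - x| = 2 * max x y := by
  rw [two_mul, ← two_nsmul, two_nsmul_sup_eq_add_add_abs_sub, add_comm y x]

section opA

variable {lam ε Λ x x' y : ℝ} {u : ℝ → ℝ}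

lemma abs_one_div_add_add_abs_sub_le (hε : 0 < ε) (hx : ε ≤ x) :
    |1 / (y + x + |y - x|)| ≤ 1 / (2 * ε) := by
  have hmax : ε ≤ max x y := hx.trans (le_max_left x y)
  rw [add_add_abs_sub_eq_two_mul_max, abs_of_pos (by have := hε.trans_le hmax; positivity)]
  gcongr

lemma abs_one_div_add_add_abs_sub_sub_le (hε : 0 < ε) (hx : ε ≤ x) (hx' : ε ≤ x') :
    |1 / (y + x + |y - x|) - 1 / (y + x' + |y - x'|)| ≤ |x - x'| / (2 * ε ^ 2) := by
  simp only [add_add_abs_sub_eq_two_mul_max]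
  calc _ ≤ |2 * max x y - 2 * max x' y| / (2 * ε) ^ 2 :=
        abs_one_div_sub_one_div_le (by positivity) (by gcongr; exact hx.trans (le_max_left x y))
          (by gcongr; exact hx'.trans (le_max_left x' y))
    _ ≤ 2 * |x - x'| / (2 * ε) ^ 2 := by
        rw [← mul_sub, abs_mul, abs_two]
        gcongr 2 * ?_ / _
        exact abs_max_sub_max_le_abs x x' y
    _ = |x - x'| / (2 * ε ^ 2) := by field_simp

lemma abs_mul_div_add_sq_le_of_mem_Ioc (hε : 0 < ε) (hy : y ∈ Ioc ε Λ) (t : ℝ) :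
    |y * t / (y + t ^ 2)| ≤ √Λ / 2 := by
  calc _ ≤ √y / 2 := abs_mul_div_add_sq_le (hε.trans hy.1) t
    _ ≤ √Λ / 2 := by gcongr; exact hy.2

lemma intervalIntegrable_opA_integrand (hε : 0 < ε) (hu : ContinuousOn u (Icc ε Λ))
    (hx : x ∈ Icc ε Λ) :
    IntervalIntegrable (fun y => 1 / (y + x + |y - x|) * (y * u y / (y + u y ^ 2))) volume ε Λ := by
  refine ContinuousOn.intervalIntegrable ?_
  rw [uIcc_of_le (hx.1.trans hx.2)]
  refine ContinuousOn.mul ?_ ?_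
  · refine continuousOn_const.div (by fun_prop) fun y hy => ?_
    rw [add_add_abs_sub_eq_two_mul_max]
    exact (mul_pos two_pos (hε.trans_le (hx.1.trans (le_max_left x y)))).ne'
  · refine (continuousOn_id.mul hu).div (continuousOn_id.add (hu.pow 2)) fun y hy => ?_
    exact (add_pos_of_pos_of_nonneg (hε.trans_le hy.1) (sq_nonneg _)).ne'

lemma abs_opA_le (hε : 0 < ε) (hx : x ∈ Icc ε Λ) :
    |opA lam ε Λ u x| ≤ |lam| / 2 * (√Λ / (4 * ε) * (Λ - ε)) := by
  have hεΛ : ε ≤ Λ := hx.1.trans hx.2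
  rw [opA, abs_mul, abs_div, abs_two, ← abs_of_nonneg (sub_nonneg.2 hεΛ)]
  gcongr
  rw [← Real.norm_eq_abs]
  refine intervalIntegral.norm_integral_le_of_norm_le_const fun y hy => ?_
  rw [uIoc_of_le hεΛ] at hy
  rw [Real.norm_eq_abs, abs_mul]
  calc _ ≤ 1 / (2 * ε) * (√Λ / 2) :=
        mul_le_mul (abs_one_div_add_add_abs_sub_le hε hx.1)
          (abs_mul_div_add_sq_le_of_mem_Ioc hε hy _) (abs_nonneg _) (by positivity)
    _ = √Λ / (4 * ε) := by field_simp; ring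

lemma abs_opA_sub_opA_le (hε : 0 < ε) (hu : ContinuousOn u (Icc ε Λ)) (hx : x ∈ Icc ε Λ)
    (hx' : x' ∈ Icc ε Λ) :
    |opA lam ε Λ u x - opA lam ε Λ u x'| ≤
      |lam| / 2 * (√Λ / (4 * ε ^ 2) * (Λ - ε)) * |x - x'| := by
  have hεΛ : ε ≤ Λ := hx.1.trans hx.2
  rw [opA, opA, ← mul_sub, ← integral_sub (intervalIntegrable_opA_integrand hε hu hx)
    (intervalIntegrable_opA_integrand hε hu hx'), abs_mul, abs_div, abs_two, mul_assoc,
    ← abs_of_nonneg (sub_nonneg.2 hεΛ)]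
  gcongr
  simp_rw [← sub_mul]
  calc _ ≤ |x - x'| / (2 * ε ^ 2) * (√Λ / 2) * |Λ - ε| := by
        rw [← Real.norm_eq_abs]
        refine intervalIntegral.norm_integral_le_of_norm_le_const fun y hy => ?_
        rw [uIoc_of_le hεΛ] at hy
        rw [Real.norm_eq_abs, abs_mul]
        exact mul_le_mul (abs_one_div_add_add_abs_sub_sub_le hε hx.1 hx'.1)
          (abs_mul_div_add_sq_le_of_mem_Ioc hε hy _) (abs_nonneg _) (by positivity)
    _ = _ := by field_simp; ring

end opA

theorem stmt_6_general (ε Λ lam : ℝ) (hε : 0 < ε) :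
    IsCompact (closure { f : C(Set.Icc ε Λ, ℝ) |
      ∃ u : ℝ → ℝ, memV lam ε Λ u ∧ ∀ x : Set.Icc ε Λ, f x = opA lam ε Λ u x }) := by
  set C := |lam| / 2 * (√Λ / (4 * ε) * (Λ - ε))
  set L := |lam| / 2 * (√Λ / (4 * ε ^ 2) * (Λ - ε))
  refine ContinuousMap.isCompact_closure_of_lipschitzWith (K := L.toNNReal)
    (isCompact_Icc (a := -C) (b := C)) ?_
  rintro f ⟨u, hu, hf⟩
  refine ⟨LipschitzWith.of_dist_le' fun a b => ?_, fun a => ?_⟩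
  · rw [hf a, hf b, Real.dist_eq, Subtype.dist_eq, Real.dist_eq]
    exact abs_opA_sub_opA_le hε hu.1 a.2 b.2
  · rw [mem_Icc, ← abs_le, hf a]
    exact abs_opA_le hε a.2

theorem stmt_6 (ε Λ lam : ℝ) (hε : 0 < ε) (hεΛ : ε < Λ) (hlam : 2 < lam)
    (hratio : ε / Λ ≤ min (1 / 16)
      (((Real.sqrt (lam ^ 2 + 128 * (lam - 2)) - lam) / 64) ^ 2)) :
    IsCompact (closure { f : C(Set.Icc ε Λ, ℝ) |
      ∃ u : ℝ → ℝ, memV lam ε Λ u ∧ ∀ x : Set.Icc ε Λ, f x = opA lam ε Λ u x }) :=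
  stmt_6_general ε Λ lam hε
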